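/- Let G = Sp(4, F_q) with q odd and π a representation of G admitting a nondegenerate invariant symmetric bilinear form. Then Θ_π(I) - Θ_π(-I) is divisible by 16. -/

import Mathlib

open Matrix

/-- The antidiagonal symplectic form matrix with entries 1, -1, 1, -1 from the top right. -/
def J4 (F : Type*) [Field F] : Matrix (Fin 4) (Fin 4) F :=
  fun i j => if (i : ℕ) + (j : ℕ) = 3 then (-1 : F) ^ (i : ℕ) else 0

/-- `Sp(4, F)`, the symplectic group for the form `J4`, as a submonoid of the matrix ring. -/
def Sp4 (F : Type*) [Field F] : Submonoid (Matrix (Fin 4) (Fin 4) F) where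
  carrier := {A | Aᵀ * J4 F * A = J4 F}
  one_mem' := by simp
  mul_mem' := by
    intro a b ha hb
    simp only [Set.mem_setOf_eq] at *
    have h : (a * b)ᵀ * J4 F * (a * b) = bᵀ * (aᵀ * J4 F * a) * b := by
      rw [transpose_mul]
      noncomm_ring
    rw [h, ha, hb]

/-!
Write `a = π(-I)`, so that `Θ(1) - Θ(-1) = tr (1 - a) = 2 dim V₋` with `V₋` the `(-1)`-eigenspace
of `a`. Sp(4) contains an involution `z` and an element `s` conjugating `z` to `-z` on `V₋`, so
the two eigenspaces of `z` on `V₋` have equal dimension. On `W = V₋ ∩ {z = 1}` two further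
elements `i`, `j` act with `i² = j² = -1` and `ji = -ij`, so `j` swaps the two eigenspaces of `i`,
halving once more. On `U = W ∩ {i = -√-1}` the form `(u, u') ↦ B u (j u')` is alternating and
nondegenerate, hence `dim U` is even and `tr (1 - a) = 8 dim U ∈ 16ℤ`. Each halving is the trace
identity `tr e = 2 tr (e p)`, valid as soon as a conjugation carries `e p` to `e - e p`.
-/

section HalfOneAdd

variable {K R : Type*} [Field K] [Ring R] [Algebra K R]

theorem mul_half_one_add_mul_of_mul_mul_self {e x : R} (hx : e * x * x = e) :
    e * (2⁻¹ : K) • (1 + x) * x = e * (2⁻¹ : K) • (1 + x) := by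
  rw [mul_smul_comm, smul_mul_assoc, mul_add, add_mul, mul_one, hx, add_comm]

variable [NeZero (2 : K)]

theorem isIdempotentElem_mul_half_one_add {e x : R} (he : IsIdempotentElem e)
    (hex : Commute e x) (hx : e * x * x = e) :
    IsIdempotentElem (e * (2⁻¹ : K) • (1 + x)) := by
  set p : R := (2⁻¹ : K) • (1 + x)
  have hep : Commute e p := ((Commute.one_right e).add_right hex).smul_right _
  have hpx : e * p * x = e * p := mul_half_one_add_mul_of_mul_mul_self hx
  calc e * p * (e * p) = e * p * p := by
        rw [← mul_assoc, mul_assoc e p e, ← hep.eq, ← mul_assoc, he.eq]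
  _ = (2⁻¹ : K) • (e * p + e * p * x) := by rw [mul_smul_comm, mul_add, mul_one]
  _ = e * p := by
    rw [hpx, ← two_smul K (e * p), smul_smul, inv_mul_cancel₀ two_ne_zero, one_smul]

theorem conj_mul_half_one_add {e x g h : R} (hgh : g * h = 1) (hhg : h * g = 1)
    (hge : g * e * h = e) (hgx : e * (g * x * h) = -(e * x)) :
    g * (e * (2⁻¹ : K) • (1 + x)) * h = e - e * (2⁻¹ : K) • (1 + x) := by
  have key : g * (e * (1 + x)) * h = e - e * x :=
    calc g * (e * (1 + x)) * h = g * e * (h * g) * (1 + x) * h := by rw [hhg]; noncomm_ring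
    _ = g * e * h * (g * h + g * x * h) := by noncomm_ring
    _ = e - e * x := by rw [hge, hgh, mul_add, mul_one, hgx, sub_eq_add_neg]
  rw [mul_smul_comm, mul_smul_comm, smul_mul_assoc, key, mul_add, mul_one]
  match_scalars <;> field_simp; norm_num

end HalfOneAdd

theorem LinearMap.trace_eq_two_mul_of_conj_eq_sub {R M : Type*} [CommRing R] [AddCommGroup M]
    [Module R M] {e y g h : Module.End R M} (hhg : h * g = 1) (hy : g * y * h = e - y) :
    trace R M e = 2 * trace R M y := by
  have hconj : trace R M (g * y * h) = trace R M y := by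
    rw [trace_mul_cycle, hhg, one_mul]
  rw [hy, map_sub] at hconj
  linear_combination hconj

theorem LinearMap.IsOrthogonal.isAdjointPair {R M : Type*} [CommRing R] [AddCommGroup M]
    [Module R M] {B : LinearMap.BilinForm R M} {g h : Module.End R M} (hg : B.IsOrthogonal g)
    (hgh : g * h = 1) : LinearMap.IsAdjointPair B B g h := fun x y => by
  rw [← hg x (h y), ← Module.End.mul_apply g h, hgh, Module.End.one_apply]

theorem LinearMap.BilinForm.even_finrank_of_skew {K W : Type*} [Field K] [NeZero (2 : K)]
    [AddCommGroup W] [Module K W] [FiniteDimensional K W] (β : LinearMap.BilinForm K W)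
    (hskew : ∀ v w, β v w = -β w v) (hsep : ∀ v, (∀ w, β v w = 0) → v = 0) :
    Even (Module.finrank K W) := by
  let b := Module.finBasis K W
  have hrefl : β.IsRefl := fun v w h => by rw [hskew, h, neg_zero]
  have hdet : (toMatrix b β).det ≠ 0 :=
    (nondegenerate_iff_det_ne_zero b).mp (hrefl.nondegenerate_iff_separatingLeft.mpr hsep)
  have htr : (toMatrix b β)ᵀ = -toMatrix b β := by
    ext v w
    simp only [Matrix.transpose_apply, Matrix.neg_apply, toMatrix_apply]
    exact hskew _ _
  have hdet_neg : (toMatrix b β).det = (-1) ^ Module.finrank K W * (toMatrix b β).det := by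
    conv_lhs => rw [← Matrix.det_transpose, htr, Matrix.det_neg, Fintype.card_fin]
  by_contra hodd
  rw [Nat.not_even_iff_odd.mp hodd |>.neg_one_pow, neg_one_mul, eq_neg_iff_add_eq_zero,
    ← two_mul, mul_eq_zero] at hdet_neg
  exact hdet_neg.elim two_ne_zero hdet

/-- Relations satisfied in `Sp(4)` by `a = -I`, `z = diag(-1, 1, 1, -1)` and the elements `s`, `i`,
`j` of `Sp4.quaternionFrame`; modulo `⟨a, z⟩`, `i` and `j` generate a quaternion group. -/
structure QuaternionFrame (M : Type*) [Monoid M] where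
  a : M
  z : M
  s : M
  i : M
  j : M
  a_mul_self : a * a = 1
  z_mul_self : z * z = 1
  s_mul_self : s * s = 1
  commute_a_z : Commute a z
  commute_a_s : Commute a s
  commute_a_i : Commute a i
  commute_a_j : Commute a j
  commute_z_i : Commute z i
  commute_z_j : Commute z j
  s_mul_z : s * z = a * z * s
  i_mul_self : i * i = a * z
  j_mul_self : j * j = a * z
  j_mul_i : j * i = a * z * (i * j)

namespace QuaternionFrame

def map {M N : Type*} [Monoid M] [Monoid N] (Q : QuaternionFrame M) (f : M →* N) :
    QuaternionFrame N where
  a := f Q.a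
  z := f Q.z
  s := f Q.s
  i := f Q.i
  j := f Q.j
  a_mul_self := by rw [← map_mul, Q.a_mul_self, map_one]
  z_mul_self := by rw [← map_mul, Q.z_mul_self, map_one]
  s_mul_self := by rw [← map_mul, Q.s_mul_self, map_one]
  commute_a_z := Q.commute_a_z.map f
  commute_a_s := Q.commute_a_s.map f
  commute_a_i := Q.commute_a_i.map f
  commute_a_j := Q.commute_a_j.map f
  commute_z_i := Q.commute_z_i.map f
  commute_z_j := Q.commute_z_j.map f
  s_mul_z := by rw [← map_mul, Q.s_mul_z, map_mul, map_mul]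
  i_mul_self := by rw [← map_mul, Q.i_mul_self, map_mul]
  j_mul_self := by rw [← map_mul, Q.j_mul_self, map_mul]
  j_mul_i := by rw [← map_mul, Q.j_mul_i, map_mul, map_mul, map_mul]

section Monoid

variable {M : Type*} [Monoid M] (Q : QuaternionFrame M)

theorem a_mul_z_mul_self : Q.a * Q.z * (Q.a * Q.z) = 1 := by
  rw [mul_assoc, ← mul_assoc Q.z, ← Q.commute_a_z.eq, mul_assoc, Q.z_mul_self, mul_one,
    Q.a_mul_self]

theorem commute_a_mul_z_j : Commute (Q.a * Q.z) Q.j := Q.commute_a_j.mul_left Q.commute_z_j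

theorem j_mul_a_mul_z_mul_j : Q.j * (Q.a * Q.z * Q.j) = 1 := by
  rw [← mul_assoc, ← Q.commute_a_mul_z_j.eq, mul_assoc, Q.j_mul_self, a_mul_z_mul_self]

theorem a_mul_z_mul_j_mul_j : Q.a * Q.z * Q.j * Q.j = 1 := by
  rw [mul_assoc, Q.j_mul_self, a_mul_z_mul_self]

theorem i_mul_a_mul_z_mul_i : Q.i * (Q.a * Q.z * Q.i) = 1 := by
  rw [← mul_assoc, ← (Q.commute_a_i.mul_left Q.commute_z_i).eq, mul_assoc, Q.i_mul_self,
    a_mul_z_mul_self]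

theorem j_mul_i_mul_a_mul_z_mul_j : Q.j * Q.i * (Q.a * Q.z * Q.j) = Q.a * Q.z * Q.i := by
  rw [Q.j_mul_i, mul_assoc (Q.a * Q.z), mul_assoc Q.i, j_mul_a_mul_z_mul_j, mul_one]

end Monoid

variable {R : Type*} [Ring R] [Algebra ℂ R] (Q : QuaternionFrame R)

/- In a representation these are the projections onto the joint eigenspaces `{a = -1}`,
`{a = -1, z = 1}` and `{a = -1, z = 1, i = -√-1}`. -/

noncomputable def projA : R := (2⁻¹ : ℂ) • (1 - Q.a)

noncomputable def projAZ : R := Q.projA * (2⁻¹ : ℂ) • (1 + Q.z)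

noncomputable def projAZI : R := Q.projAZ * (2⁻¹ : ℂ) • (1 + Complex.I • Q.i)

theorem projA_eq_one_mul : Q.projA = 1 * (2⁻¹ : ℂ) • (1 + -Q.a) := by
  rw [one_mul, ← sub_eq_add_neg, projA]

theorem isIdempotentElem_projA : IsIdempotentElem Q.projA := by
  rw [projA_eq_one_mul]
  exact isIdempotentElem_mul_half_one_add IsIdempotentElem.one (Commute.one_left _)
    (by rw [one_mul, neg_mul_neg, Q.a_mul_self])

theorem projA_mul_a : Q.projA * Q.a = -Q.projA := by
  have := mul_half_one_add_mul_of_mul_mul_self (K := ℂ) (e := (1 : R)) (x := -Q.a)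
    (by rw [one_mul, neg_mul_neg, Q.a_mul_self])
  rw [← projA_eq_one_mul, mul_neg] at this
  rw [← neg_neg (Q.projA * Q.a), this]

theorem commute_projA {x : R} (hx : Commute Q.a x) : Commute Q.projA x :=
  ((Commute.one_left x).sub_left hx).smul_left _

theorem commute_projAZ {x : R} (hax : Commute Q.a x) (hzx : Commute Q.z x) :
    Commute Q.projAZ x :=
  (Q.commute_projA hax).mul_left (((Commute.one_left x).add_left hzx).smul_left _)

theorem isIdempotentElem_projAZ : IsIdempotentElem Q.projAZ :=
  isIdempotentElem_mul_half_one_add Q.isIdempotentElem_projA (Q.commute_projA Q.commute_a_z)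
    (by rw [mul_assoc, Q.z_mul_self, mul_one])

theorem projAZ_mul_z : Q.projAZ * Q.z = Q.projAZ :=
  mul_half_one_add_mul_of_mul_mul_self (by rw [mul_assoc, Q.z_mul_self, mul_one])

theorem projAZ_mul_a : Q.projAZ * Q.a = -Q.projAZ := by
  have hap : Commute Q.a ((2⁻¹ : ℂ) • (1 + Q.z)) :=
    ((Commute.one_right _).add_right Q.commute_a_z).smul_right _
  rw [projAZ, mul_assoc, ← hap.eq, ← mul_assoc, projA_mul_a, neg_mul]

theorem projAZ_mul_a_mul_z : Q.projAZ * (Q.a * Q.z) = -Q.projAZ := by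
  rw [← mul_assoc, projAZ_mul_a, neg_mul, projAZ_mul_z]

theorem a_mul_z_mul_projAZ : Q.a * Q.z * Q.projAZ = -Q.projAZ := by
  rw [← (Q.commute_projAZ (Commute.refl _ |>.mul_right Q.commute_a_z)
    (Q.commute_a_z.symm.mul_right (Commute.refl _))).eq, projAZ_mul_a_mul_z]

theorem a_mul_z_mul_projAZI : Q.a * Q.z * Q.projAZI = -Q.projAZI := by
  rw [projAZI, ← mul_assoc, a_mul_z_mul_projAZ, neg_mul]

theorem isIdempotentElem_projAZI : IsIdempotentElem Q.projAZI :=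
  isIdempotentElem_mul_half_one_add Q.isIdempotentElem_projAZ
    ((Q.commute_projAZ Q.commute_a_i Q.commute_z_i).smul_right _)
    (by
      simp only [mul_smul_comm, smul_mul_assoc, smul_smul]
      rw [mul_assoc, Q.i_mul_self, projAZ_mul_a_mul_z, Complex.I_mul_I, neg_one_smul, neg_neg])

theorem conj_s_projAZ : Q.s * Q.projAZ * Q.s = Q.projA - Q.projAZ :=
  conj_mul_half_one_add Q.s_mul_self Q.s_mul_self
    (by rw [mul_assoc, (Q.commute_projA Q.commute_a_s).eq, ← mul_assoc, Q.s_mul_self, one_mul])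
    (by rw [Q.s_mul_z, mul_assoc, Q.s_mul_self, mul_one, ← mul_assoc, projA_mul_a, neg_mul])

theorem conj_j_projAZI : Q.j * Q.projAZI * (Q.a * Q.z * Q.j) = Q.projAZ - Q.projAZI :=
  conj_mul_half_one_add Q.j_mul_a_mul_z_mul_j Q.a_mul_z_mul_j_mul_j
    (by
      rw [← (Q.commute_projAZ Q.commute_a_j Q.commute_z_j).eq, mul_assoc, j_mul_a_mul_z_mul_j,
        mul_one])
    (by
      rw [mul_smul_comm, smul_mul_assoc, j_mul_i_mul_a_mul_z_mul_j, mul_smul_comm, mul_smul_comm,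
        ← mul_assoc, projAZ_mul_a_mul_z, neg_mul, smul_neg])

section Endomorphism

open LinearMap

variable {V : Type*} [AddCommGroup V] [Module ℂ V] (Q : QuaternionFrame (Module.End ℂ V))

theorem trace_one_sub_a : trace ℂ V (1 - Q.a) = 8 * trace ℂ V Q.projAZI := by
  have hA : trace ℂ V (1 - Q.a) = 2 * trace ℂ V Q.projA := by
    rw [projA, map_smul, smul_eq_mul, ← mul_assoc]; norm_num
  rw [hA, trace_eq_two_mul_of_conj_eq_sub Q.s_mul_self Q.conj_s_projAZ,
    trace_eq_two_mul_of_conj_eq_sub Q.a_mul_z_mul_j_mul_j Q.conj_j_projAZI]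
  ring

variable {B : LinearMap.BilinForm ℂ V}

theorem isAdjointPair_projAZI (ha : B.IsOrthogonal Q.a) (hz : B.IsOrthogonal Q.z)
    (hi : B.IsOrthogonal Q.i) : IsAdjointPair B B Q.projAZI ⇑(Q.projAZ - Q.projAZI) := by
  have hA : IsAdjointPair B B Q.projA Q.projA :=
    (isAdjointPair_one.sub (ha.isAdjointPair Q.a_mul_self)).smul _
  have hZ : IsAdjointPair B B ⇑((2⁻¹ : ℂ) • (1 + Q.z)) ⇑((2⁻¹ : ℂ) • (1 + Q.z)) :=
    (isAdjointPair_one.add (hz.isAdjointPair Q.z_mul_self)).smul _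
  have hAZ : IsAdjointPair B B Q.projAZ Q.projAZ := by
    have := hA.mul hZ
    rwa [← (Q.commute_projA (((Commute.one_right _).add_right Q.commute_a_z).smul_right _)).eq]
      at this
  have hI : IsAdjointPair B B ⇑((2⁻¹ : ℂ) • (1 + Complex.I • Q.i))
      ⇑((2⁻¹ : ℂ) • (1 + Complex.I • (Q.a * Q.z * Q.i))) :=
    (isAdjointPair_one.add ((hi.isAdjointPair Q.i_mul_a_mul_z_mul_i).smul _)).smul _
  have hazi : Q.a * Q.z * Q.i * Q.projAZ = -(Q.projAZ * Q.i) := by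
    rw [mul_assoc, ← (Q.commute_projAZ Q.commute_a_i Q.commute_z_i).eq, ← mul_assoc,
      a_mul_z_mul_projAZ, neg_mul]
  have hadj : (2⁻¹ : ℂ) • (1 + Complex.I • (Q.a * Q.z * Q.i)) * Q.projAZ =
      Q.projAZ - Q.projAZI := by
    rw [projAZI]
    simp only [add_mul, mul_add, smul_mul_assoc, mul_smul_comm, one_mul, mul_one, hazi]
    module
  rw [← hadj]
  exact hAZ.mul hI

theorem even_finrank_range_projAZI [FiniteDimensional ℂ V] (hsymm : ∀ v w, B v w = B w v)
    (hnondeg : ∀ v, (∀ w, B v w = 0) → v = 0) (ha : B.IsOrthogonal Q.a)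
    (hz : B.IsOrthogonal Q.z) (hi : B.IsOrthogonal Q.i) (hj : B.IsOrthogonal Q.j) :
    Even (Module.finrank ℂ (range Q.projAZI)) := by
  set P := range Q.projAZI
  have hfix : ∀ v ∈ P, Q.projAZI v = v := Q.isIdempotentElem_projAZI.isProj_range.map_id
  have hjj : ∀ v ∈ P, Q.j (Q.j v) = -v := fun v hv => by
    rw [← Module.End.mul_apply, Q.j_mul_self, ← hfix v hv, ← Module.End.mul_apply,
      a_mul_z_mul_projAZI, LinearMap.neg_apply, hfix v hv]
  apply LinearMap.BilinForm.even_finrank_of_skew (B.compl₁₂ P.subtype (Q.j ∘ₗ P.subtype))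
  · intro v w
    simp only [compl₁₂_apply, Submodule.subtype_apply, coe_comp, Function.comp_apply]
    rw [← hj w (Q.j v), hjj v v.2, map_neg, neg_neg, hsymm]
  · intro v hv
    ext
    refine hnondeg v fun u => ?_
    -- the `B`-adjoint of `projAZI` is its `j`-conjugate, whose range is `j P`
    rw [← hfix v v.2, Q.isAdjointPair_projAZI ha hz hi, ← Q.conj_j_projAZI]
    exact hv ⟨_, mem_range_self _ ((Q.a * Q.z * Q.j) u)⟩

theorem exists_trace_one_sub_a_eq_sixteen_mul [FiniteDimensional ℂ V]
    (hsymm : ∀ v w, B v w = B w v) (hnondeg : ∀ v, (∀ w, B v w = 0) → v = 0)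
    (ha : B.IsOrthogonal Q.a) (hz : B.IsOrthogonal Q.z) (hi : B.IsOrthogonal Q.i)
    (hj : B.IsOrthogonal Q.j) : ∃ m : ℤ, trace ℂ V (1 - Q.a) = 16 * m := by
  obtain ⟨k, hk⟩ := Q.even_finrank_range_projAZI hsymm hnondeg ha hz hi hj
  refine ⟨k, ?_⟩
  rw [trace_one_sub_a, Q.isIdempotentElem_projAZI.isProj_range.trace, hk]
  push_cast
  ring

end Endomorphism

end QuaternionFrame

theorem FiniteField.exists_sq_add_sq_eq_neg_one (F : Type*) [Field F] [Finite F] :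
    ∃ x y : F, x ^ 2 + y ^ 2 = -1 := by
  have : Fact (ringChar F).Prime := ⟨CharP.char_is_prime F (ringChar F)⟩
  obtain ⟨x, y, hxy⟩ := CharP.sq_add_sq F (ringChar F) (-1)
  exact ⟨x, y, by exact_mod_cast hxy⟩

namespace Sp4

variable {F : Type*} [Field F]

theorem J4_eq : J4 F = !![0, 0, 0, 1; 0, 0, -1, 0; 0, 1, 0, 0; -1, 0, 0, 0] := by
  ext r c; fin_cases r <;> fin_cases c <;> norm_num [J4]

def zMatrix : Matrix (Fin 4) (Fin 4) F := !![-1, 0, 0, 0; 0, 1, 0, 0; 0, 0, 1, 0; 0, 0, 0, -1]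

def sMatrix : Matrix (Fin 4) (Fin 4) F := !![0, 1, 0, 0; 1, 0, 0, 0; 0, 0, 0, -1; 0, 0, -1, 0]

-- `x ^ 2 + y ^ 2 = -1` makes `iMatrix x y` symplectic, with square `-1` on the middle block.
def iMatrix (x y : F) : Matrix (Fin 4) (Fin 4) F :=
  !![1, 0, 0, 0; 0, x, y, 0; 0, y, -x, 0; 0, 0, 0, 1]

def jMatrix : Matrix (Fin 4) (Fin 4) F := !![1, 0, 0, 0; 0, 0, 1, 0; 0, -1, 0, 0; 0, 0, 0, 1]

theorem neg_one_mem : (-1 : Matrix (Fin 4) (Fin 4) F) ∈ Sp4 F := by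
  change (-1)ᵀ * J4 F * -1 = J4 F
  simp

theorem zMatrix_mem : zMatrix ∈ Sp4 F := by
  change zMatrixᵀ * J4 F * zMatrix = J4 F
  ext r c; fin_cases r <;> fin_cases c <;>
    simp [zMatrix, J4_eq, Matrix.mul_apply, Fin.sum_univ_four]

theorem sMatrix_mem : sMatrix ∈ Sp4 F := by
  change sMatrixᵀ * J4 F * sMatrix = J4 F
  ext r c; fin_cases r <;> fin_cases c <;>
    simp [sMatrix, J4_eq, Matrix.mul_apply, Fin.sum_univ_four]

theorem iMatrix_mem {x y : F} (hxy : x ^ 2 + y ^ 2 = -1) : iMatrix x y ∈ Sp4 F := by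
  change (iMatrix x y)ᵀ * J4 F * iMatrix x y = J4 F
  ext r c; fin_cases r <;> fin_cases c <;>
    simp [iMatrix, J4_eq, Matrix.mul_apply, Fin.sum_univ_four]
  all_goals grind

theorem jMatrix_mem : jMatrix ∈ Sp4 F := by
  change jMatrixᵀ * J4 F * jMatrix = J4 F
  ext r c; fin_cases r <;> fin_cases c <;>
    simp [jMatrix, J4_eq, Matrix.mul_apply, Fin.sum_univ_four]

theorem zMatrix_mul_self : zMatrix * zMatrix = (1 : Matrix (Fin 4) (Fin 4) F) := by
  ext r c; fin_cases r <;> fin_cases c <;> simp [zMatrix, Matrix.mul_apply, Fin.sum_univ_four]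

theorem sMatrix_mul_self : sMatrix * sMatrix = (1 : Matrix (Fin 4) (Fin 4) F) := by
  ext r c; fin_cases r <;> fin_cases c <;> simp [sMatrix, Matrix.mul_apply, Fin.sum_univ_four]

theorem zMatrix_mul_iMatrix (x y : F) : zMatrix * iMatrix x y = iMatrix x y * zMatrix := by
  ext r c; fin_cases r <;> fin_cases c <;>
    simp [zMatrix, iMatrix, Matrix.mul_apply, Fin.sum_univ_four]

theorem zMatrix_mul_jMatrix : zMatrix * jMatrix = jMatrix * (zMatrix : Matrix _ _ F) := by
  ext r c; fin_cases r <;> fin_cases c <;>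
    simp [zMatrix, jMatrix, Matrix.mul_apply, Fin.sum_univ_four]

theorem sMatrix_mul_zMatrix : sMatrix * zMatrix = -1 * zMatrix * (sMatrix : Matrix _ _ F) := by
  ext r c; fin_cases r <;> fin_cases c <;>
    simp [zMatrix, sMatrix, Matrix.mul_apply, Fin.sum_univ_four]

theorem iMatrix_mul_self {x y : F} (hxy : x ^ 2 + y ^ 2 = -1) :
    iMatrix x y * iMatrix x y = -1 * zMatrix := by
  ext r c; fin_cases r <;> fin_cases c <;>
    simp [zMatrix, iMatrix, Matrix.mul_apply, Fin.sum_univ_four]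
  all_goals grind

theorem jMatrix_mul_self : jMatrix * jMatrix = -1 * (zMatrix : Matrix _ _ F) := by
  ext r c; fin_cases r <;> fin_cases c <;>
    simp [zMatrix, jMatrix, Matrix.mul_apply, Fin.sum_univ_four]

theorem jMatrix_mul_iMatrix (x y : F) :
    jMatrix * iMatrix x y = -1 * zMatrix * (iMatrix x y * jMatrix) := by
  ext r c; fin_cases r <;> fin_cases c <;>
    simp [zMatrix, iMatrix, jMatrix, Matrix.mul_apply, Fin.sum_univ_four]

def quaternionFrame {x y : F} (hxy : x ^ 2 + y ^ 2 = -1) : QuaternionFrame (Sp4 F) where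
  a := ⟨-1, neg_one_mem⟩
  z := ⟨zMatrix, zMatrix_mem⟩
  s := ⟨sMatrix, sMatrix_mem⟩
  i := ⟨iMatrix x y, iMatrix_mem hxy⟩
  j := ⟨jMatrix, jMatrix_mem⟩
  a_mul_self := Subtype.ext ((neg_one_mul (-1)).trans (neg_neg 1))
  z_mul_self := Subtype.ext zMatrix_mul_self
  s_mul_self := Subtype.ext sMatrix_mul_self
  commute_a_z := Subtype.ext (Commute.neg_one_left _).eq
  commute_a_s := Subtype.ext (Commute.neg_one_left _).eq
  commute_a_i := Subtype.ext (Commute.neg_one_left _).eq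
  commute_a_j := Subtype.ext (Commute.neg_one_left _).eq
  commute_z_i := Subtype.ext (zMatrix_mul_iMatrix x y)
  commute_z_j := Subtype.ext zMatrix_mul_jMatrix
  s_mul_z := Subtype.ext sMatrix_mul_zMatrix
  i_mul_self := Subtype.ext (iMatrix_mul_self hxy)
  j_mul_self := Subtype.ext jMatrix_mul_self
  j_mul_i := Subtype.ext (jMatrix_mul_iMatrix x y)

end Sp4

theorem sp4_character_difference_div_sixteen_general
    {F : Type*} [Field F] [Fintype F]
    {V : Type*} [AddCommGroup V] [Module ℂ V] [FiniteDimensional ℂ V]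
    (π : Representation ℂ (Sp4 F) V)
    (B : V →ₗ[ℂ] V →ₗ[ℂ] ℂ)
    (hsymm : ∀ v w, B v w = B w v)
    (hinv : ∀ (g : Sp4 F) (v w : V), B (π g v) (π g w) = B v w)
    (hnondeg : ∀ v : V, (∀ w : V, B v w = 0) → v = 0)
    (z : Sp4 F)
    (hz : (z : Matrix (Fin 4) (Fin 4) F) = -1) :
    ∃ m : ℤ,
      LinearMap.trace ℂ V (π 1) - LinearMap.trace ℂ V (π z) = (16 * m : ℤ) := by
  obtain ⟨x, y, hxy⟩ := FiniteField.exists_sq_add_sq_eq_neg_one F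
  let Q := Sp4.quaternionFrame hxy
  have hQa : Q.a = z := Subtype.ext hz.symm
  obtain ⟨m, hm⟩ := (Q.map π).exists_trace_one_sub_a_eq_sixteen_mul hsymm hnondeg
    (hinv Q.a) (hinv Q.z) (hinv Q.i) (hinv Q.j)
  refine ⟨m, ?_⟩
  rw [map_one, ← map_sub, ← hQa]
  exact_mod_cast hm

theorem sp4_character_difference_div_sixteen
    {F : Type*} [Field F] [Fintype F] (hq : Odd (Fintype.card F))
    {V : Type*} [AddCommGroup V] [Module ℂ V] [FiniteDimensional ℂ V]
    (π : Representation ℂ (Sp4 F) V)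
    (B : V →ₗ[ℂ] V →ₗ[ℂ] ℂ)
    (hsymm : ∀ v w, B v w = B w v)
    (hinv : ∀ (g : Sp4 F) (v w : V), B (π g v) (π g w) = B v w)
    (hnondeg : ∀ v : V, (∀ w : V, B v w = 0) → v = 0)
    (z : Sp4 F)
    (hz : (z : Matrix (Fin 4) (Fin 4) F) = -1) :
    ∃ m : ℤ,
      LinearMap.trace ℂ V (π 1) - LinearMap.trace ℂ V (π z) = (16 * m : ℤ) :=
  sp4_character_difference_div_sixteen_general π B hsymm hinv hnondeg z hz
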